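/- arXiv:1410.8740 — 2 statements merged into one kernel-verified Lean document; each statement's English description precedes it below -/
import Mathlib

section
/- For the Two-component copula Z(u,v) = ∫_0^∞ F_{G1}(w/(u^{-1/α1} - 1)) F_{G2}(w/(v^{-1/α2} - 1)) e^{-w} dw on (0,1)^2 (the copula of (-X1, -X2)), the mixed second partial derivative is z(u,v) = [u^{-(1/α1+1)} v^{-(1/α2+1)} (u^{-1/α1} - 1)^{α2} (v^{-1/α2} - 1)^{α1}] / [(α1+α2+1) B(α1+1, α2+1) (u^{-1/α1} v^{-1/α2} - 1)^{α1+α2+1}]. -/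
open MeasureTheory ProbabilityTheory Real Set

/-- The cdf of the gamma distribution (removed from Mathlib; restored with its old definition). -/
noncomputable def ProbabilityTheory.gammaCDFReal (a r : ℝ) : StieltjesFunction ℝ :=
  cdf (gammaMeasure a r)

/-- The copula of `(-X1,-X2)` in the Two-component model. -/
noncomputable def twoComponentZ (α1 α2 : ℝ) (u v : ℝ) : ℝ :=
  ∫ w in Ioi (0 : ℝ),
    ProbabilityTheory.gammaCDFReal α1 1 (w / (u ^ (-(1 / α1)) - 1)) *
      ProbabilityTheory.gammaCDFReal α2 1 (w / (v ^ (-(1 / α2)) - 1)) * Real.exp (-w)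

/-! With `sᵢ = uᵢ ^ (-1/αᵢ) - 1`, `Z(u, v) = ∫ F₁(w/s₁) F₂(w/s₂) e^{-w} dw`. Differentiating under
the integral sign, first in `u` and then in `v`, each cdf `Fᵢ(w/sᵢ)` becomes the kernel
`fᵢ(w/sᵢ) · w/sᵢ² = sᵢ^(-αᵢ-1)/Γ(αᵢ) · w^αᵢ e^{-w/sᵢ}` times `(1/αᵢ) uᵢ^(-1/αᵢ-1)`; the kernel is
dominated by a multiple of `w^αᵢ` uniformly for `sᵢ` near any positive value. The resulting
integrand is a multiple of `w^(α₁+α₂) e^{-(1 + 1/s₁ + 1/s₂) w}`, a Gamma integral, and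
`s₁ s₂ (1 + 1/s₁ + 1/s₂) = u^(-1/α₁) v^(-1/α₂) - 1`. -/

namespace ProbabilityTheory

theorem hasDerivAt_gammaCDFReal {a r x : ℝ} (ha : 0 < a) (hr : 0 < r) (hx : 0 < x) :
    HasDerivAt (gammaCDFReal a r) (gammaPDFReal a r x) x := by
  have hint : Integrable (gammaPDFReal a r) := by
    refine ⟨(measurable_gammaPDFReal a r).aestronglyMeasurable, ?_⟩
    rw [hasFiniteIntegral_iff_ofReal (ae_of_all _ (gammaPDFReal_nonneg ha hr))]
    simpa only [gammaPDF] using (lintegral_gammaPDF_eq_one ha hr).trans_lt ENNReal.one_lt_top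
  have hcdf : gammaCDFReal a r = fun y => (∫ t in Iic 0, gammaPDFReal a r t)
      + ∫ t in (0 : ℝ)..y, gammaPDFReal a r t := by
    ext y
    rw [← intervalIntegral.integral_Iic_sub_Iic hint.integrableOn hint.integrableOn,
      add_sub_cancel, gammaCDFReal, cdf_gammaMeasure_eq_integral ha hr]
  have hcont : ContinuousAt (gammaPDFReal a r) x := by
    refine ContinuousAt.congr (f := fun y => r ^ a / Gamma a * y ^ (a - 1) * exp (-(r * y)))
      (by fun_prop (disch := exact Or.inl hx.ne')) ?_
    filter_upwards [eventually_ge_nhds hx] with y hy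
    simp only [gammaPDFReal, if_pos hy]
  rw [hcdf]
  exact (intervalIntegral.integral_hasDerivAt_right hint.intervalIntegrable
    (stronglyMeasurable_gammaPDFReal a r).stronglyMeasurableAtFilter hcont).const_add _

theorem norm_gammaCDFReal_le_one (a r x : ℝ) : ‖gammaCDFReal a r x‖ ≤ 1 :=
  (norm_of_nonneg (cdf_nonneg (gammaMeasure a r) x)).trans_le (cdf_le_one _ x)

theorem integrableOn_rpow_mul_gammaCDFReal_div_mul_exp_neg {p : ℝ} (hp : -1 < p) (α s : ℝ) :
    IntegrableOn (fun w => w ^ p * (gammaCDFReal α 1 (w / s) * exp (-w))) (Ioi 0) := by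
  have hmeas : AEStronglyMeasurable (fun w => gammaCDFReal α 1 (w / s))
      (volume.restrict (Ioi 0)) :=
    ((gammaCDFReal α 1).mono.measurable.comp (measurable_id.div_const s)).aestronglyMeasurable
  have h := (integrableOn_rpow_mul_exp_neg_rpow hp one_pos).bdd_mul hmeas
    (.of_forall fun w => norm_gammaCDFReal_le_one α 1 _)
  refine IntegrableOn.congr_fun h (fun w _ => ?_) measurableSet_Ioi
  simp only [rpow_one]
  ring

section Kernel

variable {α s w : ℝ}

theorem gammaPDFReal_div_mul_div_sq (hw : 0 < w) (hs : 0 < s) :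
    gammaPDFReal α 1 (w / s) * (w / s ^ 2)
      = s ^ (-α - 1) / Gamma α * (w ^ α * exp (-(w / s))) := by
  simp only [gammaPDFReal, if_pos (div_pos hw hs).le, one_rpow, one_mul, div_rpow hw.le hs.le,
    rpow_sub_one hw.ne', rpow_sub_one hs.ne', rpow_neg hs.le]
  field_simp

theorem hasDerivAt_gammaCDFReal_div (hα : 0 < α) (hw : 0 < w) (hs : 0 < s) :
    HasDerivAt (fun s => gammaCDFReal α 1 (w / s))
      (-(gammaPDFReal α 1 (w / s) * (w / s ^ 2))) s :=
  ((hasDerivAt_gammaCDFReal hα one_pos (div_pos hw hs)).comp s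
    ((hasDerivAt_inv hs.ne').const_mul w)).congr_deriv (by ring)

theorem hasDerivAt_integral_gammaCDFReal_div_mul {s₀ : ℝ} (hα : 0 < α) (hs₀ : 0 < s₀)
    {g : ℝ → ℝ} (hg : IntegrableOn g (Ioi 0))
    (hg_rpow : IntegrableOn (fun w => w ^ α * g w) (Ioi 0)) :
    HasDerivAt (fun s => ∫ w in Ioi 0, gammaCDFReal α 1 (w / s) * g w)
      (-∫ w in Ioi 0, gammaPDFReal α 1 (w / s₀) * (w / s₀ ^ 2) * g w) s₀ := by
  have hmeas (s : ℝ) : AEStronglyMeasurable (fun w => gammaCDFReal α 1 (w / s))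
      (volume.restrict (Ioi 0)) :=
    ((gammaCDFReal α 1).mono.measurable.comp (measurable_id.div_const s)).aestronglyMeasurable
  have hbound : ∀ᵐ w ∂volume.restrict (Ioi 0), ∀ s ∈ Ioi (s₀ / 2),
      ‖-(gammaPDFReal α 1 (w / s) * (w / s ^ 2) * g w)‖
        ≤ (s₀ / 2) ^ (-α - 1) / Gamma α * ‖w ^ α * g w‖ := by
    refine (ae_restrict_iff' measurableSet_Ioi).2 (.of_forall fun w (hw : 0 < w) s hs => ?_)
    have hs_pos : 0 < s := (half_pos hs₀).trans hs
    calc ‖-(gammaPDFReal α 1 (w / s) * (w / s ^ 2) * g w)‖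
        = s ^ (-α - 1) / Gamma α * exp (-(w / s)) * ‖w ^ α * g w‖ := by
          rw [norm_neg, gammaPDFReal_div_mul_div_sq hw hs_pos, norm_mul, norm_mul, norm_mul,
            norm_mul, norm_of_nonneg (by positivity : 0 ≤ s ^ (-α - 1) / Gamma α),
            norm_of_nonneg (by positivity : 0 ≤ w ^ α), norm_of_nonneg (exp_pos _).le]
          ring
      _ ≤ (s₀ / 2) ^ (-α - 1) / Gamma α * 1 * ‖w ^ α * g w‖ := by
          have hpow : s ^ (-α - 1) ≤ (s₀ / 2) ^ (-α - 1) :=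
            rpow_le_rpow_of_nonpos (half_pos hs₀) (le_of_lt hs) (by linarith)
          have hexp : exp (-(w / s)) ≤ 1 :=
            exp_le_one_iff.2 (neg_nonpos.2 (div_pos hw hs_pos).le)
          gcongr
      _ = (s₀ / 2) ^ (-α - 1) / Gamma α * ‖w ^ α * g w‖ := by rw [mul_one]
  have h := hasDerivAt_integral_of_dominated_loc_of_deriv_le
    (F := fun s w => gammaCDFReal α 1 (w / s) * g w)
    (F' := fun s w => -(gammaPDFReal α 1 (w / s) * (w / s ^ 2) * g w))
    (Ioi_mem_nhds (half_lt_self hs₀))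
    (.of_forall fun s => (hmeas s).mul hg.aestronglyMeasurable)
    (hg.bdd_mul (hmeas s₀) (.of_forall fun w => norm_gammaCDFReal_le_one α 1 _))
    ((((measurable_gammaPDFReal α 1).comp (measurable_id.div_const s₀)).mul
      (measurable_id.div_const _)).aestronglyMeasurable.mul hg.aestronglyMeasurable).neg
    hbound (hg_rpow.norm.const_mul _) ?_
  · simpa only [integral_neg] using h.2
  · refine (ae_restrict_iff' measurableSet_Ioi).2 (.of_forall fun w (hw : 0 < w) s hs => ?_)
    simpa only [neg_mul] using
      (hasDerivAt_gammaCDFReal_div hα hw ((half_pos hs₀).trans hs)).mul_const (g w)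

theorem integral_gammaPDFReal_div_mul_div_sq_mul {β t : ℝ} (hα : 0 < α) (hβ : 0 < β)
    (hs : 0 < s) (ht : 0 < t) :
    ∫ w in Ioi 0, gammaPDFReal β 1 (w / t) * (w / t ^ 2)
        * (gammaPDFReal α 1 (w / s) * (w / s ^ 2) * exp (-w))
      = s ^ β * t ^ α * Gamma (α + β + 1)
          / (Gamma α * Gamma β * (s * t + s + t) ^ (α + β + 1)) := by
  have hr : 0 < 1 + s⁻¹ + t⁻¹ := by positivity
  have hintegrand : ∀ w ∈ Ioi (0 : ℝ), gammaPDFReal β 1 (w / t) * (w / t ^ 2)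
        * (gammaPDFReal α 1 (w / s) * (w / s ^ 2) * exp (-w))
      = s ^ (-α - 1) / Gamma α * (t ^ (-β - 1) / Gamma β)
          * (w ^ (α + β + 1 - 1) * exp (-((1 + s⁻¹ + t⁻¹) * w))) := by
    intro w (hw : 0 < w)
    have hpow : w ^ (α + β + 1 - 1) = w ^ β * w ^ α := by rw [← rpow_add hw]; ring_nf
    have hexp : exp (-((1 + s⁻¹ + t⁻¹) * w))
        = exp (-(w / t)) * exp (-(w / s)) * exp (-w) := by
      rw [← exp_add, ← exp_add]
      ring_nf
    rw [gammaPDFReal_div_mul_div_sq hw ht, gammaPDFReal_div_mul_div_sq hw hs, hpow, hexp]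
    ring
  have hinv : (1 / (1 + s⁻¹ + t⁻¹)) ^ (α + β + 1)
      = s ^ (α + β + 1) * t ^ (α + β + 1) / (s * t + s + t) ^ (α + β + 1) := by
    rw [← mul_rpow hs.le ht.le, ← div_rpow (by positivity) (by positivity)]
    congr 1
    field_simp
    ring
  have hs_pow : s ^ (-α - 1) = s ^ β / s ^ (α + β + 1) := by
    rw [← rpow_sub hs]; ring_nf
  have ht_pow : t ^ (-β - 1) = t ^ α / t ^ (α + β + 1) := by
    rw [← rpow_sub ht]; ring_nf
  rw [setIntegral_congr_fun measurableSet_Ioi hintegrand, integral_const_mul,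
    integral_rpow_mul_exp_neg_mul_Ioi (by positivity) hr, hinv, hs_pow, ht_pow]
  field_simp

theorem integrableOn_rpow_mul_gammaPDFReal_div_mul_div_sq_mul_exp_neg {p : ℝ}
    (hp : -1 < p + α) (hs : 0 < s) :
    IntegrableOn (fun w => w ^ p * (gammaPDFReal α 1 (w / s) * (w / s ^ 2) * exp (-w)))
      (Ioi 0) := by
  have h := (integrableOn_rpow_mul_exp_neg_mul_rpow hp one_pos
    (by positivity : 0 < 1 + s⁻¹)).const_mul (s ^ (-α - 1) / Gamma α)
  refine IntegrableOn.congr_fun h (fun w (hw : 0 < w) => ?_) measurableSet_Ioi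
  have hexp : exp (-(1 + s⁻¹) * w) = exp (-(w / s)) * exp (-w) := by
    rw [← exp_add]
    ring_nf
  rw [gammaPDFReal_div_mul_div_sq hw hs, rpow_one, rpow_add hw, hexp]
  ring

end Kernel

end ProbabilityTheory

noncomputable def twoComponentScale (α u : ℝ) : ℝ := u ^ (-(1 / α)) - 1

section TwoComponentScale

variable {α u : ℝ}

theorem twoComponentScale_pos (hα : 0 < α) (hu : u ∈ Ioo 0 1) : 0 < twoComponentScale α u :=
  sub_pos.2 (one_lt_rpow_of_pos_of_lt_one_of_neg hu.1 hu.2 (by simpa using hα))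

theorem hasDerivAt_twoComponentScale (hu : 0 < u) :
    HasDerivAt (twoComponentScale α) (-(1 / α) * u ^ (-(1 / α) - 1)) u :=
  (hasDerivAt_rpow_const (Or.inl hu.ne')).sub_const 1

theorem hasDerivAt_integral_gammaCDFReal_div_twoComponentScale_mul (hα : 0 < α)
    (hu : u ∈ Ioo 0 1) {g : ℝ → ℝ} (hg : IntegrableOn g (Ioi 0))
    (hg_rpow : IntegrableOn (fun w => w ^ α * g w) (Ioi 0)) :
    HasDerivAt (fun u => ∫ w in Ioi 0, gammaCDFReal α 1 (w / twoComponentScale α u) * g w)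
      (1 / α * u ^ (-(1 / α) - 1) * ∫ w in Ioi 0, gammaPDFReal α 1 (w / twoComponentScale α u)
        * (w / twoComponentScale α u ^ 2) * g w) u :=
  ((hasDerivAt_integral_gammaCDFReal_div_mul hα (twoComponentScale_pos hα hu) hg hg_rpow).comp u
    (hasDerivAt_twoComponentScale hu.1)).congr_deriv (by ring)

end TwoComponentScale

theorem hasDerivAt_twoComponentZ_left {α1 α2 u : ℝ} (hα1 : 0 < α1) (hu : u ∈ Ioo 0 1)
    (v : ℝ) :
    HasDerivAt (fun u => twoComponentZ α1 α2 u v)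
      (1 / α1 * u ^ (-(1 / α1) - 1) * ∫ w in Ioi 0,
        gammaCDFReal α2 1 (w / twoComponentScale α2 v) * (gammaPDFReal α1 1
          (w / twoComponentScale α1 u) * (w / twoComponentScale α1 u ^ 2) * exp (-w))) u := by
  have h := hasDerivAt_integral_gammaCDFReal_div_twoComponentScale_mul hα1 hu
    (g := fun w => gammaCDFReal α2 1 (w / twoComponentScale α2 v) * exp (-w))
    (by simpa using
          integrableOn_rpow_mul_gammaCDFReal_div_mul_exp_neg (p := 0) (by norm_num) α2 _)
    (integrableOn_rpow_mul_gammaCDFReal_div_mul_exp_neg (by linarith) α2 _)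
  convert h using 1
  · ext u'
    exact integral_congr_ae (.of_forall fun w => mul_assoc _ _ _)
  · congr 1
    exact integral_congr_ae (.of_forall fun w => by ring)

theorem hasDerivAt_deriv_twoComponentZ_left {α1 α2 u v : ℝ} (hα1 : 0 < α1) (hα2 : 0 < α2)
    (hu : u ∈ Ioo 0 1) (hv : v ∈ Ioo 0 1) :
    HasDerivAt (fun v => deriv (fun u => twoComponentZ α1 α2 u v) u)
      (1 / α1 * u ^ (-(1 / α1) - 1) * (1 / α2 * v ^ (-(1 / α2) - 1) * ∫ w in Ioi 0,
        gammaPDFReal α2 1 (w / twoComponentScale α2 v) * (w / twoComponentScale α2 v ^ 2)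
          * (gammaPDFReal α1 1 (w / twoComponentScale α1 u) * (w / twoComponentScale α1 u ^ 2)
            * exp (-w)))) v := by
  have hs1 := twoComponentScale_pos hα1 hu
  rw [funext fun v' => (hasDerivAt_twoComponentZ_left (α2 := α2) hα1 hu v').deriv]
  exact (hasDerivAt_integral_gammaCDFReal_div_twoComponentScale_mul hα2 hv
    (by simpa using integrableOn_rpow_mul_gammaPDFReal_div_mul_div_sq_mul_exp_neg
          (α := α1) (p := 0) (by linarith) hs1)
    (integrableOn_rpow_mul_gammaPDFReal_div_mul_div_sq_mul_exp_neg (α := α1) (by linarith)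
      hs1)).const_mul _

/-- Density of the copula `Z` of `(-X1,-X2)`: for `(u,v) ∈ (0,1)²`,
`z(u,v) = ∂²Z/∂u∂v` equals the stated closed form involving the Beta function. -/
theorem twoComponentZ_density {α1 α2 : ℝ} (hα1 : 0 < α1) (hα2 : 0 < α2)
    (u v : ℝ) (hu : u ∈ Ioo (0:ℝ) 1) (hv : v ∈ Ioo (0:ℝ) 1) :
    deriv (fun v' : ℝ => deriv (fun u' : ℝ => twoComponentZ α1 α2 u' v') u) v
      = u ^ (-(1 / α1 + 1)) * v ^ (-(1 / α2 + 1)) * (u ^ (-(1 / α1)) - 1) ^ α2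
          * (v ^ (-(1 / α2)) - 1) ^ α1
        / ((α1 + α2 + 1)
            * (Real.Gamma (α1 + 1) * Real.Gamma (α2 + 1) / Real.Gamma (α1 + α2 + 2))
            * (u ^ (-(1 / α1)) * v ^ (-(1 / α2)) - 1) ^ (α1 + α2 + 1)) := by
  have hs1 := twoComponentScale_pos hα1 hu
  have hs2 := twoComponentScale_pos hα2 hv
  have hprod : u ^ (-(1 / α1)) * v ^ (-(1 / α2)) - 1
      = twoComponentScale α1 u * twoComponentScale α2 v + twoComponentScale α1 u
        + twoComponentScale α2 v := by
    simp only [twoComponentScale]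
    ring
  rw [(hasDerivAt_deriv_twoComponentZ_left hα1 hα2 hu hv).deriv,
    integral_gammaPDFReal_div_mul_div_sq_mul hα1 hα2 hs1 hs2, hprod,
    show u ^ (-(1 / α1)) - 1 = twoComponentScale α1 u from rfl,
    show v ^ (-(1 / α2)) - 1 = twoComponentScale α2 v from rfl, neg_add', neg_add',
    Gamma_add_one hα1.ne', Gamma_add_one hα2.ne', show α1 + α2 + 2 = α1 + α2 + 1 + 1 by ring,
    Gamma_add_one (by positivity : α1 + α2 + 1 ≠ 0)]
  have := Gamma_pos_of_pos hα1
  have := Gamma_pos_of_pos hα2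
  have := Gamma_pos_of_pos (by positivity : 0 < α1 + α2 + 1)
  field_simp
end

section
/- Let W, G1, G2 be independent with W ~ Exp(1) and Gi ~ Gamma(αi,1), αi > 0. Then U = (1 + W/G1)^{α1} and V = (1 + W/G2)^{α2} have the Two-component copula with parameters α1, α2. -/
open MeasureTheory ProbabilityTheory Real Set

/-- The Two-component copula with parameters `α1 α2` (formula valid on `(0,1)²`). -/
noncomputable def twoComponentCopula (α1 α2 : ℝ) (u1 u2 : ℝ) : ℝ :=
  u1 + u2 - 1 + ∫ w in Ioi (0 : ℝ),
    ProbabilityTheory.gammaCDFReal α1 1 (w / ((1 - u1) ^ (-(1 / α1)) - 1)) *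
      ProbabilityTheory.gammaCDFReal α2 1 (w / ((1 - u2) ^ (-(1 / α2)) - 1)) *
        Real.exp (-w)

/-! Since `W, G > 0` almost surely, `(1 + W/G)^α ≤ s` holds iff `W ≤ c G` with `c = s^{1/α} - 1`.
Conditioning on `G` gives `P(c G < W) = E[e^{-c G}] = (1 + c)^{-α}`, so `c = (1 - u)^{-1/α} - 1`
is recovered from `u = P(U ≤ s)`. By inclusion–exclusion the joint probability is
`u + v - 1 + P(c₁ G₁ < W, c₂ G₂ < W)`, and conditioning on `W` turns the last term into
`∫ F₁(w/c₁) F₂(w/c₂) e^{-w} dw`. -/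

namespace ProbabilityTheory

instance (a r : ℝ) : SFinite (gammaMeasure a r) :=
  inferInstanceAs (SFinite (volume.withDensity _))

instance (a r : ℝ) : NullSingletonClass (gammaMeasure a r) :=
  nullSingletonClass_withDensity _

lemma measurable_gammaPDF (a r : ℝ) : Measurable (gammaPDF a r) :=
  (measurable_gammaPDFReal a r).ennreal_ofReal

lemma ae_pos_gammaMeasure (a r : ℝ) : ∀ᵐ x ∂gammaMeasure a r, 0 < x := by
  rw [ae_iff]
  simp only [not_lt]
  change gammaMeasure a r (Iic 0) = 0
  rw [gammaMeasure, withDensity_apply _ measurableSet_Iic,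
    setLIntegral_congr Iio_ae_eq_Iic.symm, lintegral_gammaPDF_of_nonpos le_rfl]

lemma gammaMeasure_Iio {a r : ℝ} (ha : 0 < a) (hr : 0 < r) (x : ℝ) :
    gammaMeasure a r (Iio x) = ENNReal.ofReal (gammaCDFReal a r x) := by
  have := isProbabilityMeasure_gammaMeasure ha hr
  rw [measure_congr Iio_ae_eq_Iic, gammaCDFReal, ofReal_cdf]

lemma expMeasure_Ioi {r x : ℝ} (hr : 0 < r) (hx : 0 ≤ x) :
    expMeasure r (Ioi x) = ENNReal.ofReal (exp (-(r * x))) := by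
  have := isProbabilityMeasure_expMeasure hr
  have hle : exp (-(r * x)) ≤ 1 := exp_le_one_iff.2 (by simp only [neg_nonpos]; positivity)
  rw [← compl_Iic, prob_compl_eq_one_sub measurableSet_Iic, ← ofReal_cdf, cdf_expMeasure_eq hr,
    if_pos hx, ← ENNReal.ofReal_one, ← ENNReal.ofReal_sub _ (by linarith), sub_sub_cancel]

lemma gammaPDF_mul_exp_neg_mul {a r c : ℝ} (hr : 0 ≤ r) (hrc : 0 < r + c) (x : ℝ) :
    gammaPDF a r x * ENNReal.ofReal (exp (-(c * x))) =
      ENNReal.ofReal ((r / (r + c)) ^ a) * gammaPDF a (r + c) x := by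
  rcases lt_or_ge x 0 with hx | hx
  · simp [gammaPDF_of_neg hx]
  rw [gammaPDF_of_nonneg hx, gammaPDF_of_nonneg hx, mul_comm, ← ENNReal.ofReal_mul (exp_nonneg _),
    ← ENNReal.ofReal_mul (by positivity), div_rpow hr hrc.le]
  congr 1
  rw [add_mul, neg_add, exp_add]
  field_simp

lemma lintegral_exp_neg_mul_gammaMeasure {a r c : ℝ} (ha : 0 < a) (hr : 0 ≤ r)
    (hrc : 0 < r + c) :
    ∫⁻ x, ENNReal.ofReal (exp (-(c * x))) ∂gammaMeasure a r =
      ENNReal.ofReal ((r / (r + c)) ^ a) := by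
  rw [gammaMeasure,
    lintegral_withDensity_eq_lintegral_mul _ (measurable_gammaPDF a r) (by fun_prop)]
  simp only [Pi.mul_apply, gammaPDF_mul_exp_neg_mul hr hrc]
  rw [lintegral_const_mul _ (measurable_gammaPDF a (r + c)), lintegral_gammaPDF_eq_one ha hrc,
    mul_one]

lemma toReal_lintegral_expMeasure {r : ℝ} (hr : 0 ≤ r) {f : ℝ → ℝ} (hf : Measurable f)
    (hf0 : ∀ x, 0 ≤ f x) :
    (∫⁻ x, ENNReal.ofReal (f x) ∂expMeasure r).toReal =
      ∫ x in Ioi 0, f x * (r * exp (-(r * x))) := by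
  rw [integral_eq_lintegral_of_nonneg_ae
    (ae_of_all _ fun x => mul_nonneg (hf0 x) (by positivity)) (by fun_prop)]
  congr 1
  rw [expMeasure, gammaMeasure, lintegral_withDensity_eq_lintegral_mul _ (measurable_gammaPDF 1 r)
      (by fun_prop), ← setLIntegral_eq_of_support_subset (s := Ici 0),
    setLIntegral_congr Ioi_ae_eq_Ici.symm]
  · refine setLIntegral_congr_fun measurableSet_Ioi fun x (hx : 0 < x) => ?_
    rw [Pi.mul_apply, gammaPDF_of_nonneg hx.le, mul_comm, ← ENNReal.ofReal_mul (hf0 x)]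
    simp
  · intro x hx
    by_contra h
    simp [gammaPDF_of_neg (not_le.1 h)] at hx

lemma toReal_lintegral_expMeasure_prod_Iio_prod_Iio {α1 α2 : ℝ} (hα1 : 0 < α1) (hα2 : 0 < α2)
    (c1 c2 : ℝ) :
    (∫⁻ w, ((gammaMeasure α1 1).prod (gammaMeasure α2 1)) (Iio (w / c1) ×ˢ Iio (w / c2))
        ∂expMeasure 1).toReal =
      ∫ w in Ioi 0, gammaCDFReal α1 1 (w / c1) * gammaCDFReal α2 1 (w / c2) * exp (-w) := by
  have hF : Measurable fun w => gammaCDFReal α1 1 (w / c1) * gammaCDFReal α2 1 (w / c2) := by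
    have (a c : ℝ) : Measurable fun w => gammaCDFReal a 1 (w / c) :=
      (gammaCDFReal a 1).mono.measurable.comp (measurable_id.div_const c)
    exact (this α1 c1).mul (this α2 c2)
  have hF0 (a x : ℝ) : 0 ≤ gammaCDFReal a 1 x := cdf_nonneg _ x
  simp_rw [Measure.prod_prod, gammaMeasure_Iio hα1 one_pos, gammaMeasure_Iio hα2 one_pos,
    ← ENNReal.ofReal_mul (hF0 _ _)]
  rw [toReal_lintegral_expMeasure zero_le_one hF fun w => mul_nonneg (hF0 _ _) (hF0 _ _)]
  simp only [one_mul]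

end ProbabilityTheory

lemma ProbabilityTheory.IndepFun.measure_preimage_prodMk {Ω α β : Type*} [MeasurableSpace Ω]
    [MeasurableSpace α] [MeasurableSpace β] {μ : Measure Ω} [IsFiniteMeasure μ]
    {X : Ω → α} {Y : Ω → β} (h : IndepFun X Y μ) (hX : Measurable X) (hY : Measurable Y)
    {S : Set (α × β)} (hS : MeasurableSet S) :
    μ ((fun ω => (X ω, Y ω)) ⁻¹' S) = ∫⁻ x, μ.map Y (Prod.mk x ⁻¹' S) ∂μ.map X := by
  rw [← Measure.map_apply (hX.prodMk hY) hS,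
    h.map_prod_eq_prod_map_map hX.aemeasurable hY.aemeasurable, Measure.prod_apply hS]

lemma MeasureTheory.probReal_compl_inter_compl {Ω : Type*} [MeasurableSpace Ω] {μ : Measure Ω}
    [IsProbabilityMeasure μ] {s t : Set Ω} (hs : MeasurableSet s) (ht : MeasurableSet t) :
    μ.real (sᶜ ∩ tᶜ) = μ.real sᶜ + μ.real tᶜ - 1 + μ.real (s ∩ t) := by
  have h := measureReal_union_add_inter (μ := μ) (s := sᶜ) ht.compl
  rw [← compl_inter, probReal_compl_eq_one_sub (hs.inter ht)] at h
  linarith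

lemma one_add_div_rpow_le_iff {w g α s : ℝ} (hw : 0 ≤ w) (hg : 0 < g) (hα : 0 < α) (hs : 0 ≤ s) :
    (1 + w / g) ^ α ≤ s ↔ w ≤ (s ^ α⁻¹ - 1) * g := by
  rw [← le_rpow_inv_iff_of_pos (by positivity) hs hα, ← le_sub_iff_add_le', div_le_iff₀ hg]

lemma one_lt_one_add_div_rpow {w g α : ℝ} (hw : 0 < w) (hg : 0 < g) (hα : 0 < α) :
    1 < (1 + w / g) ^ α :=
  one_lt_rpow (lt_add_of_pos_right 1 (div_pos hw hg)) hα

section PowerTransform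

variable {Ω : Type*} [MeasurableSpace Ω] {μ : Measure Ω}

lemma ae_pos_of_map_eq_gammaMeasure {X : Ω → ℝ} {a r : ℝ} (hX : Measurable X)
    (hlaw : μ.map X = gammaMeasure a r) : ∀ᵐ ω ∂μ, 0 < X ω :=
  ae_of_ae_map hX.aemeasurable (hlaw ▸ ae_pos_gammaMeasure a r)

lemma exists_pos_ae_eq_compl_mul_lt {W G : Ω → ℝ} {α s : ℝ} (hW : ∀ᵐ ω ∂μ, 0 < W ω)
    (hG : ∀ᵐ ω ∂μ, 0 < G ω) (hα : 0 < α) (hs : μ {ω | (1 + W ω / G ω) ^ α ≤ s} ≠ 0) :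
    ∃ c, 0 < c ∧ ({ω | (1 + W ω / G ω) ^ α ≤ s} : Set Ω) =ᵐ[μ] ({ω | c * G ω < W ω}ᶜ : Set Ω) := by
  have hs1 : 1 < s := by
    by_contra! hs1
    refine hs (measure_eq_zero_iff_ae_notMem.2 ?_)
    filter_upwards [hW, hG] with ω hw hg hle
    exact absurd (hle.trans hs1) (one_lt_one_add_div_rpow hw hg hα).not_ge
  refine ⟨s ^ α⁻¹ - 1, sub_pos.2 (one_lt_rpow hs1 (inv_pos.2 hα)), ?_⟩
  rw [Filter.eventuallyEq_set]
  filter_upwards [hW, hG] with ω hw hg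
  simp only [mem_ofPred_eq, mem_compl_iff, not_lt]
  exact one_add_div_rpow_le_iff hw.le hg hα (by linarith)

variable [IsProbabilityMeasure μ]

lemma measure_mul_lt_of_indepFun {G W : Ω → ℝ} {α c : ℝ} (hind : IndepFun G W μ)
    (hG : Measurable G) (hW : Measurable W) (hGlaw : μ.map G = gammaMeasure α 1)
    (hWlaw : μ.map W = expMeasure 1) (hα : 0 < α) (hc : 0 ≤ c) :
    μ {ω | c * G ω < W ω} = ENNReal.ofReal ((1 + c) ^ (-α)) :=
  calc μ {ω | c * G ω < W ω} = ∫⁻ g, expMeasure 1 (Ioi (c * g)) ∂gammaMeasure α 1 := by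
        rw [← hGlaw, ← hWlaw]
        exact hind.measure_preimage_prodMk hG hW
          (measurableSet_lt (measurable_fst.const_mul c) measurable_snd)
    _ = ∫⁻ g, ENNReal.ofReal (exp (-(c * g))) ∂gammaMeasure α 1 := by
        refine lintegral_congr_ae ?_
        filter_upwards [ae_pos_gammaMeasure α 1] with g hg
        rw [expMeasure_Ioi one_pos (by positivity), one_mul]
    _ = ENNReal.ofReal ((1 + c) ^ (-α)) := by
        rw [lintegral_exp_neg_mul_gammaMeasure hα zero_le_one (by linarith), one_div,
          inv_rpow (by linarith), rpow_neg (by linarith)]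

lemma exists_threshold_of_power_transform {G W : Ω → ℝ} {α s : ℝ} (hind : IndepFun G W μ)
    (hG : Measurable G) (hW : Measurable W) (hGlaw : μ.map G = gammaMeasure α 1)
    (hWlaw : μ.map W = expMeasure 1) (hα : 0 < α)
    (hs : μ {ω | (1 + W ω / G ω) ^ α ≤ s} ≠ 0) :
    ∃ c, 0 < c ∧ ({ω | (1 + W ω / G ω) ^ α ≤ s} : Set Ω) =ᵐ[μ] ({ω | c * G ω < W ω}ᶜ : Set Ω) ∧
      (1 - μ.real {ω | (1 + W ω / G ω) ^ α ≤ s}) ^ (-(1 / α)) - 1 = c := by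
  obtain ⟨c, hc, hA⟩ := exists_pos_ae_eq_compl_mul_lt (ae_pos_of_map_eq_gammaMeasure hW hWlaw)
    (ae_pos_of_map_eq_gammaMeasure hG hGlaw) hα hs
  refine ⟨c, hc, hA, ?_⟩
  rw [measureReal_congr hA, probReal_compl_eq_one_sub (measurableSet_lt (hG.const_mul c) hW),
    sub_sub_cancel, measureReal_def, measure_mul_lt_of_indepFun hind hG hW hGlaw hWlaw hα hc.le,
    ENNReal.toReal_ofReal (by positivity), one_div, ← inv_neg, rpow_rpow_inv (by linarith)
      (neg_ne_zero.2 hα.ne'), add_sub_cancel_left]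

lemma measureReal_mul_lt_inter_mul_lt {W G1 G2 : Ω → ℝ} {α1 α2 c1 c2 : ℝ}
    (hind : iIndepFun ![W, G1, G2] μ) (hW : Measurable W) (hG1 : Measurable G1)
    (hG2 : Measurable G2) (hWlaw : μ.map W = expMeasure 1)
    (hG1law : μ.map G1 = gammaMeasure α1 1) (hG2law : μ.map G2 = gammaMeasure α2 1)
    (hα1 : 0 < α1) (hα2 : 0 < α2) (hc1 : 0 < c1) (hc2 : 0 < c2) :
    μ.real ({ω | c1 * G1 ω < W ω} ∩ {ω | c2 * G2 ω < W ω}) =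
      ∫ w in Ioi 0, gammaCDFReal α1 1 (w / c1) * gammaCDFReal α2 1 (w / c2) * exp (-w) := by
  have hmeas : ∀ i, Measurable (![W, G1, G2] i) := by
    intro i; fin_cases i <;> assumption
  have hWG : IndepFun W (fun ω => (G1 ω, G2 ω)) μ := by
    simpa using (hind.indepFun_prodMk hmeas 1 2 0 (by decide) (by decide)).symm
  have hG12 : μ.map (fun ω => (G1 ω, G2 ω)) = (gammaMeasure α1 1).prod (gammaMeasure α2 1) := by
    rw [← hG1law, ← hG2law]
    exact (by simpa using hind.indepFun (show (1 : Fin 3) ≠ 2 by decide) : IndepFun G1 G2 μ)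
      |>.map_prod_eq_prod_map_map hG1.aemeasurable hG2.aemeasurable
  have hS : MeasurableSet {p : ℝ × ℝ × ℝ | c1 * p.2.1 < p.1 ∧ c2 * p.2.2 < p.1} :=
    (measurableSet_lt (by fun_prop) measurable_fst).inter
      (measurableSet_lt (by fun_prop) measurable_fst)
  have hslice (w : ℝ) : Prod.mk w ⁻¹' {p : ℝ × ℝ × ℝ | c1 * p.2.1 < p.1 ∧ c2 * p.2.2 < p.1} =
      Iio (w / c1) ×ˢ Iio (w / c2) := by
    ext ⟨g1, g2⟩
    simp [lt_div_iff₀ hc1, lt_div_iff₀ hc2, mul_comm]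
  rw [measureReal_def, show {ω | c1 * G1 ω < W ω} ∩ {ω | c2 * G2 ω < W ω} =
      (fun ω => (W ω, (G1 ω, G2 ω))) ⁻¹' {p | c1 * p.2.1 < p.1 ∧ c2 * p.2.2 < p.1} from rfl,
    hWG.measure_preimage_prodMk hW (hG1.prodMk hG2) hS, hG12, hWlaw, lintegral_congr fun w => by rw [hslice]]
  exact toReal_lintegral_expMeasure_prod_Iio_prod_Iio hα1 hα2 c1 c2

end PowerTransform

/-- If `W ~ Exp(1)`, `Gi ~ Gamma(αi,1)` are independent, then `U = (1 + W/G1)^{α1}` and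
`V = (1 + W/G2)^{α2}` have the Two-component copula with parameters `α1, α2`. -/
theorem power_transform_has_two_component_copula
    {Ω : Type*} [MeasureSpace Ω] [IsProbabilityMeasure (ℙ : Measure Ω)]
    (W G1 G2 : Ω → ℝ) (hWmeas : Measurable W)
    (hG1meas : Measurable G1) (hG2meas : Measurable G2)
    (hindep : iIndepFun ![W, G1, G2])
    (hW : Measure.map W ℙ = expMeasure 1)
    {α1 α2 : ℝ} (hα1 : 0 < α1) (hα2 : 0 < α2)
    (hG1 : Measure.map G1 ℙ = gammaMeasure α1 1)
    (hG2 : Measure.map G2 ℙ = gammaMeasure α2 1) :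
    ∀ s t : ℝ,
      (ℙ {ω | (1 + W ω / G1 ω) ^ α1 ≤ s}).toReal ∈ Ioo (0:ℝ) 1 →
      (ℙ {ω | (1 + W ω / G2 ω) ^ α2 ≤ t}).toReal ∈ Ioo (0:ℝ) 1 →
      (ℙ {ω | (1 + W ω / G1 ω) ^ α1 ≤ s ∧ (1 + W ω / G2 ω) ^ α2 ≤ t}).toReal
        = twoComponentCopula α1 α2
            (ℙ {ω | (1 + W ω / G1 ω) ^ α1 ≤ s}).toReal
            (ℙ {ω | (1 + W ω / G2 ω) ^ α2 ≤ t}).toReal := by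
  intro s t hu hv
  have hG1W : IndepFun G1 W ℙ := by simpa using hindep.indepFun (show (1 : Fin 3) ≠ 0 by decide)
  have hG2W : IndepFun G2 W ℙ := by simpa using hindep.indepFun (show (2 : Fin 3) ≠ 0 by decide)
  obtain ⟨c1, hc1, hA, hu1⟩ := exists_threshold_of_power_transform hG1W hG1meas hWmeas hG1 hW hα1
    (ENNReal.toReal_pos_iff.1 hu.1).1.ne'
  obtain ⟨c2, hc2, hB, hv1⟩ := exists_threshold_of_power_transform hG2W hG2meas hWmeas hG2 hW hα2
    (ENNReal.toReal_pos_iff.1 hv.1).1.ne'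
  simp only [← measureReal_def, ofPred_and]
  rw [twoComponentCopula, hu1, hv1, measureReal_congr (hA.inter hB),
    probReal_compl_inter_compl (measurableSet_lt (hG1meas.const_mul c1) hWmeas)
      (measurableSet_lt (hG2meas.const_mul c2) hWmeas),
    ← measureReal_congr hA, ← measureReal_congr hB,
    measureReal_mul_lt_inter_mul_lt hindep hWmeas hG1meas hG2meas hW hG1 hG2 hα1 hα2 hc1 hc2]
end
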